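/- In any legal triangulation G' of a display graph G, no fill-in edge joins two vertices originating from the same input tree; moreover, any clique of G' that contains a non-internal edge of G contains no internal edge of G. -/

import Mathlib

/-- An (unrooted) phylogenetic tree over the label type `𝕃`: a tree whose
leaves are in one-to-one correspondence with the label set `labels ⊆ 𝕃`. -/
structure PhyloTree (𝕃 : Type) where
  V : Type
  G : SimpleGraph V
  tree : G.IsTree
  labels : Set 𝕃
  lab : labels → V
  inj : Function.Injective lab
  labIsLeaf : ∀ l, ∃! w, G.Adj (lab l) w
  leafIsLab : ∀ v, (∃! w, G.Adj v w) → ∃ l, lab l = v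

/-- The vertices of the minimal subtree of `G` connecting the set `S`:
all vertices lying on a path between two vertices of `S`. -/
def connVerts {V : Type} (G : SimpleGraph V) (S : Set V) : Set V :=
  {v | ∃ a ∈ S, ∃ b ∈ S, ∃ p : G.Walk a b, p.IsPath ∧ v ∈ p.support}

/-- `ψ : A → B` exhibits `GB` as obtained from `GA` by contractions: `ψ` is
surjective, its fibres induce connected subgraphs, and adjacency in `GB` is
exactly adjacency of distinct fibres. -/
def IsContractionMap {A B : Type} (GA : SimpleGraph A) (GB : SimpleGraph B)
    (ψ : A → B) : Prop :=
  Function.Surjective ψ ∧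
  (∀ b, (GA.induce (ψ ⁻¹' {b})).Connected) ∧
  (∀ b b', GB.Adj b b' ↔ b ≠ b' ∧ ∃ a a', ψ a = b ∧ ψ a' = b' ∧ GA.Adj a a')

/-- The vertices of `T1` labeled by labels of `T2`. -/
def labeledSet {𝕃 : Type} (T1 T2 : PhyloTree 𝕃) : Set T1.V :=
  {v | ∃ (l : 𝕃) (_ : l ∈ T2.labels) (h1 : l ∈ T1.labels), T1.lab ⟨l, h1⟩ = v}

/-- `T1` displays `T2`: `T2` is obtained from the subtree of `T1` spanned by
the leaves labeled by `L(T2)` by contracting edges (contractions also account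
for suppression of degree-two vertices), preserving labels. -/
def Displays {𝕃 : Type} (T1 T2 : PhyloTree 𝕃) : Prop :=
  T2.labels ⊆ T1.labels ∧
  ∃ ψ : (connVerts T1.G (labeledSet T1 T2)) → T2.V,
    IsContractionMap (T1.G.induce (connVerts T1.G (labeledSet T1 T2))) T2.G ψ ∧
    ∀ (l : 𝕃) (h2 : l ∈ T2.labels) (h1 : l ∈ T1.labels)
      (hm : T1.lab ⟨l, h1⟩ ∈ connVerts T1.G (labeledSet T1 T2)),
      ψ ⟨T1.lab ⟨l, h1⟩, hm⟩ = T2.lab ⟨l, h2⟩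

/-- An embedding function from `T1` to `T2`: a surjective map `φ` from a
subgraph of `T1` (partial map, `none` = outside the domain) to `T2` such that
(EF1) labeled vertices map to vertices with the same label, (EF2) fibres are
connected subgraphs of `T1`, (EF3) each edge of `T2` has a unique preimage
edge in `T1`. -/
structure IsEmbeddingFunction {𝕃 : Type} (T1 T2 : PhyloTree 𝕃)
    (φ : T1.V → Option T2.V) : Prop where
  surj : ∀ v : T2.V, ∃ u, φ u = some v
  ef1 : ∀ (l : 𝕃) (h1 : l ∈ T1.labels) (v : T2.V), φ (T1.lab ⟨l, h1⟩) = some v →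
    ∃ h2 : l ∈ T2.labels, T2.lab ⟨l, h2⟩ = v
  ef2 : ∀ v : T2.V, (T1.G.induce {u | φ u = some v}).Connected
  ef3 : ∀ u v : T2.V, T2.G.Adj u v →
    ∃! e : Sym2 T1.V, e ∈ T1.G.edgeSet ∧
      ∃ u' v', e = s(u', v') ∧ φ u' = some u ∧ φ v' = some v

/-- A supertree of the profile `P`: a phylogenetic tree on the union of the
label sets. -/
def IsSupertree {𝕃 : Type} {k : ℕ} (P : Fin k → PhyloTree 𝕃)
    (T : PhyloTree 𝕃) : Prop :=
  T.labels = ⋃ i, (P i).labels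

/-- A profile is compatible if some supertree displays all of its trees. -/
def Compatible {𝕃 : Type} {k : ℕ} (P : Fin k → PhyloTree 𝕃) : Prop :=
  ∃ T : PhyloTree 𝕃, IsSupertree P T ∧ ∀ i, Displays T (P i)

/-- A graph is chordal if every cycle of length at least four has a chord. -/
def IsChordal {V : Type} (G : SimpleGraph V) : Prop :=
  ∀ ⦃v : V⦄ (c : G.Walk v v), c.IsCycle → 4 ≤ c.length →
    ∃ u w, u ∈ c.support ∧ w ∈ c.support ∧ G.Adj u w ∧ ¬ c.toSubgraph.Adj u w

/-- A tree decomposition of a graph `G`. -/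
structure TreeDecomp {V W : Type} (G : SimpleGraph V) (T : SimpleGraph W)
    (B : W → Set V) : Prop where
  tree : T.IsTree
  vertexCover : ∀ v, ∃ x, v ∈ B x
  edgeCover : ∀ ⦃u v⦄, G.Adj u v → ∃ x, u ∈ B x ∧ v ∈ B x
  coherent : ∀ v, (T.induce {x | v ∈ B x}).Connected

/-- A maximal clique of `G`. -/
def IsMaxClique {V : Type} (G : SimpleGraph V) (K : Set V) : Prop :=
  G.IsClique K ∧ ∀ K', G.IsClique K' → K ⊆ K' → K' = K

/-- A clique tree of a (chordal) graph `G`: a tree decomposition whose bags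
are in one-to-one correspondence with the maximal cliques of `G`. -/
structure IsCliqueTree {V W : Type} (G : SimpleGraph V) (T : SimpleGraph W)
    (B : W → Set V) : Prop where
  decomp : TreeDecomp G T B
  bagMax : ∀ x, IsMaxClique G (B x)
  allMax : ∀ K, IsMaxClique G K → ∃ x, B x = K
  injB : Function.Injective B

/-- The display graph of the profile `P`, presented abstractly: each input tree
embeds injectively, every vertex and every edge comes from some input tree, and
vertices of distinct input trees are identified exactly when they are leaves
carrying a common label. -/
structure DisplayGraph {𝕃 : Type} {k : ℕ} (P : Fin k → PhyloTree 𝕃) where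
  V : Type
  G : SimpleGraph V
  emb : ∀ i, (P i).V → V
  inj : ∀ i, Function.Injective (emb i)
  cover : ∀ v, ∃ i a, emb i a = v
  adj : ∀ u v, G.Adj u v ↔ ∃ i a b, (P i).G.Adj a b ∧ emb i a = u ∧ emb i b = v
  glue : ∀ i j a b, i ≠ j → (emb i a = emb j b ↔
    ∃ (l : 𝕃) (hi : l ∈ (P i).labels) (hj : l ∈ (P j).labels),
      (P i).lab ⟨l, hi⟩ = a ∧ (P j).lab ⟨l, hj⟩ = b)

variable {𝕃 : Type} {k : ℕ} {P : Fin k → PhyloTree 𝕃}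

/-- A vertex of an input tree is labeled (i.e. a leaf of that tree). -/
def PhyloTree.IsLabeledVert (t : PhyloTree 𝕃) (a : t.V) : Prop :=
  ∃ (l : 𝕃) (h : l ∈ t.labels), t.lab ⟨l, h⟩ = a

/-- A leaf vertex of the display graph: a vertex arising from identified
labeled leaves of input trees. -/
def DisplayGraph.IsLeafVertex (D : DisplayGraph P) (v : D.V) : Prop :=
  ∃ i a, (P i).IsLabeledVert a ∧ D.emb i a = v

/-- An internal edge of the display graph: both endpoints were internal
(non-leaf) vertices in the input tree it originated from. -/
def DisplayGraph.InternalEdge (D : DisplayGraph P) (u v : D.V) : Prop :=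
  ∃ i a b, (P i).G.Adj a b ∧ ¬ (P i).IsLabeledVert a ∧ ¬ (P i).IsLabeledVert b ∧
    D.emb i a = u ∧ D.emb i b = v

/-- A non-internal edge of the display graph: in the input tree it originated
from, some endpoint was a leaf. -/
def DisplayGraph.NonInternalEdge (D : DisplayGraph P) (u v : D.V) : Prop :=
  ∃ i a b, (P i).G.Adj a b ∧ ((P i).IsLabeledVert a ∨ (P i).IsLabeledVert b) ∧
    D.emb i a = u ∧ D.emb i b = v

/-- A legal triangulation of the display graph `D`: a chordal supergraph on
the same vertices such that (LT1) a clique containing an internal edge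
contains no other edge of the display graph, and (LT2) fill-in edges join only
internal vertices. -/
structure IsLegalTriangulation (D : DisplayGraph P) (G' : SimpleGraph D.V) :
    Prop where
  le : D.G ≤ G'
  chordal : IsChordal G'
  lt1 : ∀ K : Set D.V, G'.IsClique K → ∀ u v, u ∈ K → v ∈ K →
    D.InternalEdge u v → ∀ a b, a ∈ K → b ∈ K → D.G.Adj a b → s(a, b) = s(u, v)
  lt2 : ∀ u v, G'.Adj u v → ¬ D.G.Adj u v →
    ¬ D.IsLeafVertex u ∧ ¬ D.IsLeafVertex v


/-!
Let a fill-in edge of `G'` join the images of vertices `a`, `b` of one input tree `Tᵢ`. By (LT2)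
`a` and `b` are internal, hence so is every vertex of the `Tᵢ`-path between them, since leaves
have degree one. Induct on the length of that path. If it is 2, it spans with the fill-in edge a
triangle of `G'` containing an internal edge and a second edge of `G`, against (LT1). If it is
longer, it closes with the fill-in edge a cycle of length at least 4 in the chordal graph `G'`;
a chord joins two vertices of a strictly shorter subpath, so by induction it is an edge of `Tᵢ`,
and in a tree such an edge lies on the path: it is not a chord after all.

The second claim is immediate from (LT1): every edge of `G` in a clique with an internal edge is
that internal edge, whose endpoints are not leaves, whereas a non-internal edge has a leaf end.
-/

open SimpleGraph Walk

namespace SimpleGraph.Walk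

variable {V : Type} {G : SimpleGraph V} {a b c d : V}

lemma exists_isSubwalk_of_mem_support (p : G.Walk a b) (hc : c ∈ p.support)
    (hd : d ∈ p.support) : ∃ r : G.Walk c d, r.IsSubwalk p ∨ r.reverse.IsSubwalk p := by
  classical
  have hd' : d ∈ (p.takeUntil c hc).support ∨ d ∈ (p.dropUntil c hc).support := by
    rwa [← mem_support_append_iff, take_spec]
  rcases hd' with hd | hd
  · refine ⟨((p.takeUntil c hc).dropUntil d hd).reverse, Or.inr ?_⟩
    rw [reverse_reverse]
    exact (isSubwalk_dropUntil _ hd).trans (isSubwalk_takeUntil _ hc)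
  · exact ⟨(p.dropUntil c hc).takeUntil d hd,
      Or.inl ((isSubwalk_takeUntil _ hd).trans (isSubwalk_dropUntil _ hc))⟩

lemma IsSubwalk.length_lt_or_eq {r : G.Walk c d} {p : G.Walk a b} (h : r.IsSubwalk p) :
    r.length < p.length ∨ c = a ∧ d = b := by
  obtain ⟨ru, rv, rfl⟩ := h
  simp only [length_append]
  by_cases h0 : ru.length = 0 ∧ rv.length = 0
  · exact Or.inr ⟨(eq_of_length_eq_zero h0.1).symm, eq_of_length_eq_zero h0.2⟩
  · omega

lemma IsPath.exists_isPath_edges_subset {p : G.Walk a b} (hp : p.IsPath)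
    (hc : c ∈ p.support) (hd : d ∈ p.support) :
    ∃ r : G.Walk c d, r.IsPath ∧ r.edges ⊆ p.edges ∧
      (r.length < p.length ∨ s(c, d) = s(a, b)) := by
  obtain ⟨r, hr | hr⟩ := p.exists_isSubwalk_of_mem_support hc hd
  · refine ⟨r, isPath_of_isSubwalk hr hp, hr.edges_subset, ?_⟩
    rcases hr.length_lt_or_eq with h | ⟨rfl, rfl⟩
    · exact Or.inl h
    · exact Or.inr rfl
  · refine ⟨r, (isPath_reverse_iff r).mp (isPath_of_isSubwalk hr hp),
      fun e he => hr.edges_subset (by simpa [edges_reverse] using he), ?_⟩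
    rcases hr.length_lt_or_eq with h | ⟨rfl, rfl⟩
    · exact Or.inl (by simpa using h)
    · exact Or.inr Sym2.eq_swap

lemma IsPath.eq_or_eq_of_subsingleton_neighbors {p : G.Walk a b} (hp : p.IsPath) {x : V}
    (hx : x ∈ p.support) (hleaf : ∀ y z, G.Adj x y → G.Adj x z → y = z) :
    x = a ∨ x = b := by
  obtain ⟨n, rfl, hn⟩ := mem_support_iff_exists_getVert.mp hx
  by_contra! h
  obtain ⟨m, rfl⟩ : ∃ m, n = m + 1 :=
    Nat.exists_eq_add_one_of_ne_zero (by rintro rfl; simp at h)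
  have hlt : m + 1 < p.length := lt_of_le_of_ne hn (fun h' => h.2 (h' ▸ p.getVert_length))
  have heq := hleaf _ _ (p.adj_getVert_succ (i := m) (by omega)).symm (p.adj_getVert_succ hlt)
  have := hp.getVert_injOn (by simp; omega) (by simp; omega) heq
  omega

end SimpleGraph.Walk

lemma SimpleGraph.IsAcyclic.mem_edges_of_adj {V : Type} {G : SimpleGraph V} (hG : G.IsAcyclic)
    {a b c d : V} {p : G.Walk a b} (hp : p.IsPath) (hc : c ∈ p.support) (hd : d ∈ p.support)
    (hcd : G.Adj c d) : s(c, d) ∈ p.edges := by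
  obtain ⟨r, hr, hre, -⟩ := hp.exists_isPath_edges_subset hc hd
  have : r = cons hcd nil :=
    congrArg Subtype.val ((hG.subsingleton_path c d).elim ⟨r, hr⟩ (Path.singleton hcd))
  exact hre (by simp [this])

lemma IsChordal.exists_chord {V : Type} {G : SimpleGraph V} (hG : IsChordal G) {a b : V}
    {p : G.Walk a b} (hp : p.IsPath) (hab : G.Adj a b) (hab' : s(a, b) ∉ p.edges)
    (hlen : 3 ≤ p.length) :
    ∃ c ∈ p.support, ∃ d ∈ p.support, G.Adj c d ∧ s(c, d) ∉ p.edges ∧ s(c, d) ≠ s(a, b) := by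
  have hcyc : (cons hab.symm p).IsCycle :=
    (cons_isCycle_iff p hab.symm).mpr ⟨hp, by rwa [Sym2.eq_swap]⟩
  obtain ⟨c, d, hc, hd, hcd, hchord⟩ := hG _ hcyc (by simp; omega)
  rw [Subgraph.mem_edgeSet.symm.not, mem_edges_toSubgraph, edges_cons, List.mem_cons,
    not_or] at hchord
  have hsupp : ∀ x ∈ (cons hab.symm p).support, x ∈ p.support := by
    rintro x hx
    rcases List.mem_cons.mp (support_cons _ _ ▸ hx) with rfl | hx
    exacts [p.end_mem_support, hx]
  exact ⟨c, hsupp c hc, d, hsupp d hd, hcd, hchord.2, Sym2.eq_swap (a := a) ▸ hchord.1⟩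

lemma SimpleGraph.IsAcyclic.adj_of_adj_map_of_isChordal {W V : Type} {T : SimpleGraph W}
    {G : SimpleGraph V} (hT : T.IsAcyclic) (hG : IsChordal G) (f : T →g G)
    (hf : Function.Injective f) (U : Set W)
    (hleaf : ∀ x ∉ U, ∀ y z, T.Adj x y → T.Adj x z → y = z)
    (htri : ∀ ⦃a w b⦄, a ∈ U → w ∈ U → T.Adj a w → T.Adj w b → a ≠ b → ¬ G.Adj (f a) (f b))
    {a b : W} {p : T.Walk a b} (hp : p.IsPath) (ha : a ∈ U) (hb : b ∈ U)
    (hab : G.Adj (f a) (f b)) : T.Adj a b := by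
  induction hn : p.length using Nat.strong_induction_on generalizing a b p with
  | _ n ih =>
  by_contra hnab
  subst hn
  have hU : ∀ x ∈ p.support, x ∈ U := fun x hx => by
    by_contra hxU
    rcases hp.eq_or_eq_of_subsingleton_neighbors hx (hleaf x hxU) with rfl | rfl
    exacts [hxU ha, hxU hb]
  have hne : a ≠ b := fun h => hab.ne (congrArg f h)
  have hlen : 2 ≤ p.length := by
    by_contra! h
    interval_cases h' : p.length
    exacts [hne (eq_of_length_eq_zero h'), hnab (adj_of_length_eq_one h')]
  rcases hlen.eq_or_lt with h2 | h3
  · have haw := p.adj_getVert_succ (i := 0) (by omega)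
    have hwb := p.adj_getVert_succ (i := 1) (by omega)
    rw [getVert_zero] at haw
    rw [show 1 + 1 = p.length from h2, getVert_length] at hwb
    exact htri ha (hU _ (p.getVert_mem_support 1)) haw hwb hne hab
  · have hmap : ∀ {c d}, s(f c, f d) ∈ (p.map f).edges ↔ s(c, d) ∈ p.edges := by
      intro c d
      rw [edges_map, ← Sym2.map_mk, List.mem_map_of_injective (Sym2.map.injective hf)]
    obtain ⟨_, hc, _, hd, hcd, hchord, hne'⟩ := hG.exists_chord (hp.map hf) hab
      (fun h => hnab (p.adj_of_mem_edges (hmap.mp h))) (by rw [length_map]; omega)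
    rw [Walk.support_map, List.mem_map] at hc hd
    obtain ⟨c, hc, rfl⟩ := hc
    obtain ⟨d, hd, rfl⟩ := hd
    obtain ⟨r, hr, -, hrlen⟩ := hp.exists_isPath_edges_subset hc hd
    have hlt : r.length < p.length :=
      hrlen.resolve_right fun h => hne' (by simp only [← Sym2.map_mk, h])
    have hTcd : T.Adj c d := ih _ hlt hr (hU c hc) (hU d hd) hcd rfl
    exact hchord (hmap.mpr (hT.mem_edges_of_adj hp hc hd hTcd))

lemma PhyloTree.IsLabeledVert.eq_of_adj_of_adj {t : PhyloTree 𝕃} {a : t.V}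
    (ha : t.IsLabeledVert a) : ∀ y z, t.G.Adj a y → t.G.Adj a z → y = z := by
  obtain ⟨l, hl, rfl⟩ := ha
  obtain ⟨w, -, hw⟩ := t.labIsLeaf ⟨l, hl⟩
  exact fun y z hy hz => (hw y hy).trans (hw z hz).symm

namespace DisplayGraph

variable (D : DisplayGraph P)

def treeHom (i : Fin k) : (P i).G →g D.G :=
  ⟨D.emb i, fun h => (D.adj _ _).mpr ⟨i, _, _, h, rfl, rfl⟩⟩

variable {D}

lemma not_isLeafVertex_emb {i : Fin k} {a : (P i).V} (ha : ¬ (P i).IsLabeledVert a) :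
    ¬ D.IsLeafVertex (D.emb i a) := by
  rintro ⟨j, b, ⟨l, hl, rfl⟩, hba⟩
  by_cases hji : j = i
  · subst hji
    exact ha ⟨l, hl, D.inj j hba⟩
  · obtain ⟨l', -, hi, -, hla⟩ := (D.glue j i _ a hji).mp hba
    exact ha ⟨l', hi, hla⟩

lemma InternalEdge.not_isLeafVertex {u v : D.V} (h : D.InternalEdge u v) :
    ¬ D.IsLeafVertex u ∧ ¬ D.IsLeafVertex v := by
  obtain ⟨i, a, b, -, ha, hb, rfl, rfl⟩ := h
  exact ⟨not_isLeafVertex_emb ha, not_isLeafVertex_emb hb⟩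

lemma NonInternalEdge.adj {u v : D.V} (h : D.NonInternalEdge u v) : D.G.Adj u v := by
  obtain ⟨i, a, b, hab, -, rfl, rfl⟩ := h
  exact (D.treeHom i).map_adj hab

lemma NonInternalEdge.isLeafVertex {u v : D.V} (h : D.NonInternalEdge u v) :
    D.IsLeafVertex u ∨ D.IsLeafVertex v := by
  obtain ⟨i, a, b, -, ha | hb, rfl, rfl⟩ := h
  exacts [Or.inl ⟨i, a, ha, rfl⟩, Or.inr ⟨i, b, hb, rfl⟩]

end DisplayGraph

namespace IsLegalTriangulation

variable {D : DisplayGraph P} {G' : SimpleGraph D.V}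

lemma not_adj_emb_of_adj_adj (hG' : IsLegalTriangulation D G') {i : Fin k}
    {a w b : (P i).V} (ha : ¬ (P i).IsLabeledVert a) (hw : ¬ (P i).IsLabeledVert w)
    (haw : (P i).G.Adj a w) (hwb : (P i).G.Adj w b) (hab : a ≠ b) :
    ¬ G'.Adj (D.emb i a) (D.emb i b) := by
  intro h
  have hDaw : D.G.Adj (D.emb i a) (D.emb i w) := (D.treeHom i).map_adj haw
  have hDwb : D.G.Adj (D.emb i w) (D.emb i b) := (D.treeHom i).map_adj hwb
  have hK : G'.IsClique {D.emb i a, D.emb i w, D.emb i b} := by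
    simp only [isClique_insert, isClique_singleton, Set.mem_insert_iff, Set.mem_singleton_iff,
      forall_eq_or_imp, forall_eq]
    exact ⟨⟨trivial, fun _ => hG'.le hDwb⟩, fun _ => hG'.le hDaw, fun _ => h⟩
  have heq := hG'.lt1 _ hK _ _ (by simp) (by simp) ⟨i, a, w, haw, ha, hw, rfl, rfl⟩
    _ _ (by simp) (by simp) hDwb
  rcases Sym2.eq_iff.mp heq with ⟨hwa, -⟩ | ⟨-, hba⟩
  exacts [haw.ne (D.inj i hwa).symm, hab (D.inj i hba).symm]

lemma adj_of_adj_emb (hG' : IsLegalTriangulation D G') {i : Fin k} {a b : (P i).V}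
    (ha : ¬ (P i).IsLabeledVert a) (hb : ¬ (P i).IsLabeledVert b)
    (h : G'.Adj (D.emb i a) (D.emb i b)) : (P i).G.Adj a b := by
  classical
  obtain ⟨p⟩ := (P i).tree.connected.preconnected a b
  exact (P i).tree.isAcyclic.adj_of_adj_map_of_isChordal hG'.chordal
    ((Hom.ofLE hG'.le).comp (D.treeHom i)) (D.inj i) {x | ¬ (P i).IsLabeledVert x}
    (fun x hx => PhyloTree.IsLabeledVert.eq_of_adj_of_adj (not_not.mp hx))
    (fun _ _ _ ha hw haw hwb hab => hG'.not_adj_emb_of_adj_adj ha hw haw hwb hab)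
    p.bypass_isPath ha hb h

end IsLegalTriangulation

/-- In any legal triangulation of a display graph, no fill-in edge joins two
vertices originating from the same input tree; moreover any clique containing
a non-internal edge of the display graph contains no internal edge of it. -/
theorem legal_triangulation_consequences {𝕃 : Type} {k : ℕ}
    {P : Fin k → PhyloTree 𝕃} (D : DisplayGraph P) (G' : SimpleGraph D.V)
    (hG' : IsLegalTriangulation D G') :
    (∀ u v, G'.Adj u v → ¬ D.G.Adj u v →
      ¬ ∃ (i : Fin k) (a b : (P i).V), D.emb i a = u ∧ D.emb i b = v) ∧
    (∀ K : Set D.V, G'.IsClique K →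
      (∃ u v, u ∈ K ∧ v ∈ K ∧ D.NonInternalEdge u v) →
      ¬ ∃ u v, u ∈ K ∧ v ∈ K ∧ D.InternalEdge u v) := by
  constructor
  · rintro _ _ hadj hnadj ⟨i, a, b, rfl, rfl⟩
    obtain ⟨ha, hb⟩ := hG'.lt2 _ _ hadj hnadj
    exact hnadj ((D.treeHom i).map_adj <|
      hG'.adj_of_adj_emb (fun h => ha ⟨i, a, h, rfl⟩) (fun h => hb ⟨i, b, h, rfl⟩) hadj)
  · rintro K hK ⟨x, y, hx, hy, hxy⟩ ⟨u, v, hu, hv, huv⟩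
    have heq := hG'.lt1 K hK u v hu hv huv x y hx hy hxy.adj
    have hnleaf : ∀ w ∈ s(x, y), ¬ D.IsLeafVertex w := by
      rw [heq]
      rintro w hw
      rcases Sym2.mem_iff.mp hw with rfl | rfl
      exacts [huv.not_isLeafVertex.1, huv.not_isLeafVertex.2]
    rcases hxy.isLeafVertex with h | h
    exacts [hnleaf x (Sym2.mem_mk_left x y) h, hnleaf y (Sym2.mem_mk_right x y) h]
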